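/- Let v > 0, Δ ∈ [0, π/2], s ∈ {−1, 1}, β ∈ ℝ, and θ := β + sΔ. Let p : ℝ → ℝ² be differentiable at t₀ with derivative p'(t₀) = v·(cos θ, sin θ), let T ∈ ℝ² with T ≠ p(t₀), and let φ ∈ ℝ satisfy (T − p(t₀))/‖T − p(t₀)‖ = (cos φ, sin φ) and s·∠(φ − β) ∈ [0, Δ). Then the function f(t) := ⟨(cos β, sin β), (T − p(t))/‖T − p(t)‖⟩ is differentiable at t₀ with f'(t₀) ≥ 0, and f'(t₀) = 0 if and only if ∠(φ − β) = 0. -/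

import Mathlib

open Real

/-- Angular normalization: maps `a` to the unique value in `[-π, π)` congruent to `a` mod `2π`. -/
noncomputable def angNorm (a : ℝ) : ℝ :=
  2 * π * Int.fract ((a + π) / (2 * π)) - π

/-- The vector `(a, b)` in the Euclidean plane. -/
noncomputable def vec2 (a b : ℝ) : EuclideanSpace ℝ (Fin 2) := WithLp.toLp 2 ![a, b]

/-- 2D cross product `a × b = a₁·b₂ − a₂·b₁`. -/
noncomputable def cross2 (a b : EuclideanSpace ℝ (Fin 2)) : ℝ := a 0 * b 1 - a 1 * b 0

/-!
The derivative of the unit vector `g / ‖g‖` along a curve `g` is the component of `g'`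
orthogonal to `g / ‖g‖`, divided by `‖g‖`. For `g = T - p` this gives
`f'(t₀) = v / ‖T - p t₀‖ * sin (φ - β) * sin (θ - φ)`.
Up to a multiple of `2π`, `θ - φ` is `sΔ - x` with `x = ∠(φ - β)`, and the blocking condition
`0 ≤ s x < Δ ≤ π/2` turns the product of sines into `sin (s x) * sin (Δ - s x)`,
a product of two sines of angles in `[0, π]` that vanishes only for `x = 0`.
-/

open scoped RealInnerProductSpace

section NormalizedCurve

variable {E : Type*} [NormedAddCommGroup E] [InnerProductSpace ℝ E]
  {f : ℝ → E} {f' : E} {x : ℝ}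

theorem HasDerivAt.norm (hf : HasDerivAt f f' x) (h0 : f x ≠ 0) :
    HasDerivAt (‖f ·‖) (⟪f x, f'⟫ / ‖f x‖) x := by
  have h : HasDerivAt (fun t => √(‖f t‖ ^ 2)) (2 * ⟪f x, f'⟫ / (2 * √(‖f x‖ ^ 2))) x :=
    hf.norm_sq.sqrt (by positivity)
  simp only [sqrt_sq (norm_nonneg _)] at h
  convert h using 1
  field_simp

theorem HasDerivAt.inv_norm_smul (hf : HasDerivAt f f' x) (h0 : f x ≠ 0) :
    HasDerivAt (fun t => ‖f t‖⁻¹ • f t)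
      (‖f x‖⁻¹ • (f' - ⟪‖f x‖⁻¹ • f x, f'⟫ • ‖f x‖⁻¹ • f x)) x := by
  have hr : ‖f x‖ ≠ 0 := norm_ne_zero_iff.2 h0
  convert (hf.norm h0).fun_inv hr |>.fun_smul hf using 1
  rw [real_inner_smul_left]
  module

end NormalizedCurve

theorem inner_vec2 (a b c d : ℝ) : ⟪vec2 a b, vec2 c d⟫ = a * c + b * d := by
  simp only [vec2, PiLp.inner_apply, RCLike.inner_apply, ringHom_apply, Fin.sum_univ_two,
    Matrix.cons_val_zero, Matrix.cons_val_one]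
  ring

theorem inner_vec2_cos_sin (a b : ℝ) :
    ⟪vec2 (cos a) (sin a), vec2 (cos b) (sin b)⟫ = cos (a - b) := by
  rw [inner_vec2, cos_sub]

theorem exists_angNorm_eq_add_int_mul (a : ℝ) : ∃ k : ℤ, angNorm a = a + k * (2 * π) := by
  refine ⟨-⌊(a + π) / (2 * π)⌋, ?_⟩
  rw [angNorm, Int.fract]
  push_cast
  field_simp
  ring

theorem sin_angNorm (a : ℝ) : sin (angNorm a) = sin a := by
  obtain ⟨k, hk⟩ := exists_angNorm_eq_add_int_mul a
  rw [hk, sin_add_int_mul_two_pi]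

theorem sin_sub_angNorm (c a : ℝ) : sin (c - angNorm a) = sin (c - a) := by
  obtain ⟨k, hk⟩ := exists_angNorm_eq_add_int_mul a
  rw [hk, ← sin_add_int_mul_two_pi _ k]
  ring_nf

theorem sin_mul_sin_sub_nonneg {b Δ : ℝ} (hb : 0 ≤ b) (hbΔ : b ≤ Δ) (hΔ : Δ ≤ π) :
    0 ≤ sin b * sin (Δ - b) :=
  mul_nonneg (sin_nonneg_of_nonneg_of_le_pi hb (by linarith))
    (sin_nonneg_of_nonneg_of_le_pi (by linarith) (by linarith))

theorem sin_mul_sin_sub_eq_zero_iff {b Δ : ℝ} (hb : 0 ≤ b) (hbΔ : b < Δ) (hΔ : Δ ≤ π) :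
    sin b * sin (Δ - b) = 0 ↔ b = 0 := by
  refine ⟨fun h => ?_, fun h => by simp [h]⟩
  by_contra hb0
  have hb' : 0 < b := lt_of_le_of_ne hb (Ne.symm hb0)
  exact (mul_pos (sin_pos_of_pos_of_lt_pi hb' (by linarith))
    (sin_pos_of_pos_of_lt_pi (by linarith) (by linarith))).ne' h

theorem sin_mul_sin_sub_nonneg_of_angNorm {s Δ x : ℝ} (hs : s = -1 ∨ s = 1) (hΔ : Δ ≤ π)
    (hx : s * angNorm x ∈ Set.Ico 0 Δ) :
    0 ≤ sin x * sin (s * Δ - x) ∧ (sin x * sin (s * Δ - x) = 0 ↔ angNorm x = 0) := by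
  obtain ⟨hb, hbΔ⟩ := hx
  have hflip : sin (angNorm x) * sin (s * Δ - angNorm x)
      = sin (s * angNorm x) * sin (Δ - s * angNorm x) := by
    rcases hs with rfl | rfl
    · rw [show -1 * Δ - angNorm x = -(Δ - -1 * angNorm x) by ring, sin_neg, neg_one_mul, sin_neg]
      ring
    · simp only [one_mul]
  have hzero : angNorm x = 0 ↔ s * angNorm x = 0 := by
    rcases hs with rfl | rfl <;> simp
  rw [← sin_angNorm x, ← sin_sub_angNorm, hflip, hzero]
  exact ⟨sin_mul_sin_sub_nonneg hb hbΔ.le hΔ, sin_mul_sin_sub_eq_zero_iff hb hbΔ hΔ⟩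

/-- Corollary 2: in blocking mode with corrected heading `β + sΔ`,
the quantity `cos(β − φ)` is nondecreasing, with stationarity exactly when the cruising
angle coincides with the bearing angle. -/
theorem blocking_mode_cos_nondecreasing
    (v : ℝ) (hv : 0 < v) (Δ : ℝ) (hΔ : Δ ∈ Set.Icc 0 (π / 2))
    (s : ℝ) (hs : s = -1 ∨ s = 1) (β : ℝ) (θ : ℝ) (hθ : θ = β + s * Δ)
    (p : ℝ → EuclideanSpace ℝ (Fin 2)) (t₀ : ℝ)
    (hp : HasDerivAt p (v • vec2 (cos θ) (sin θ)) t₀)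
    (T : EuclideanSpace ℝ (Fin 2)) (hT : T ≠ p t₀)
    (φ : ℝ) (hφ : (‖T - p t₀‖)⁻¹ • (T - p t₀) = vec2 (cos φ) (sin φ))
    (hcone : s * angNorm (φ - β) ∈ Set.Ico 0 Δ) :
    ∃ d : ℝ,
      HasDerivAt
        (fun t => (inner ℝ (vec2 (cos β) (sin β)) ((‖T - p t‖)⁻¹ • (T - p t)) : ℝ)) d t₀ ∧
      0 ≤ d ∧ (d = 0 ↔ angNorm (φ - β) = 0) := by
  have hr : 0 < v / ‖T - p t₀‖ := div_pos hv (norm_pos_iff.2 (sub_ne_zero.2 hT))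
  have hdir : HasDerivAt (fun t => T - p t) (-(v • vec2 (cos θ) (sin θ))) t₀ := by
    simpa using (hasDerivAt_const t₀ T).fun_sub hp
  have hd := (hasDerivAt_const t₀ (vec2 (cos β) (sin β))).inner ℝ
    (hdir.inv_norm_smul (sub_ne_zero.2 hT))
  rw [hφ, inner_zero_left, add_zero] at hd
  obtain ⟨hnonneg, hzero⟩ :=
    sin_mul_sin_sub_nonneg_of_angNorm hs (by linarith [hΔ.2, pi_pos]) hcone
  refine ⟨v / ‖T - p t₀‖ * (sin (φ - β) * sin (s * Δ - (φ - β))), hd.congr_deriv ?_,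
    mul_nonneg hr.le hnonneg, by rw [mul_eq_zero, or_iff_right hr.ne', hzero]⟩
  simp only [inner_smul_right, inner_sub_right, inner_neg_right, inner_vec2_cos_sin]
  have hcos : cos (β - θ) = cos (β - φ) * cos (φ - θ) - sin (β - φ) * sin (φ - θ) := by
    rw [← cos_add, sub_add_sub_cancel]
  have hsin : sin (s * Δ - (φ - β)) = -sin (φ - θ) := by
    rw [← sin_neg, hθ]
    ring_nf
  rw [hcos, hsin, ← neg_sub β φ, sin_neg]
  field_simp
  ring
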